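/- arXiv:1512.08760 — 2 statements merged into one kernel-verified Lean document; each statement's English description precedes it below -/
import Mathlib

section
/- Let X be a set with the P_Z(S)-metric d(x,y) = ∅ if x = y, L otherwise, where L, Z are nonempty subsets of S. If L ⊊ Z, then the only open sets of the induced topology are ∅ and X (the indiscrete topology). -/
/-! Every distance is contained in `L`, and `L` is strictly contained in every positive `ε`,
so every ball of positive radius is the whole space. -/

open Set

section BallEqUniv

variable {S X : Type*} {Z L : Set S} {d : X → X → Set S}

theorem setOf_dist_ssubset_eq_univ (hdL : ∀ x y, d x y ⊆ L) (hLZ : L ⊂ Z) {ε : Set S}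
    (hZε : Z ⊆ ε) (x : X) : {y | d x y ⊂ ε} = univ :=
  eq_univ_of_forall fun y => (hdL x y).trans_ssubset (hLZ.trans_subset hZε)

theorem forall_exists_ball_subset_iff_of_ball_eq_univ
    (hball : ∀ x ε, Z ⊆ ε → {y | d x y ⊂ ε} = univ) (U : Set X) :
    (∀ x ∈ U, ∃ ε : Set S, Z ⊆ ε ∧ {y | d x y ⊂ ε} ⊆ U) ↔ (U = ∅ ∨ U = univ) := by
  constructor
  · intro hU
    refine U.eq_empty_or_nonempty.imp id fun ⟨x, hx⟩ => ?_
    obtain ⟨ε, hZε, hsub⟩ := hU x hx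
    exact univ_subset_iff.mp (hball x ε hZε ▸ hsub)
  · rintro (rfl | rfl)
    · simp
    · exact fun _ _ => ⟨Z, subset_rfl, subset_univ _⟩

end BallEqUniv

theorem stmt13_general {S X : Type*} [DecidableEq X]
    (Z L : Set S) (hLZ : L ⊂ Z)
    (d : X → X → Set S)
    (hd : ∀ x y, d x y = if x = y then (∅ : Set S) else L) :
    ∀ U : Set X,
      (∀ x ∈ U, ∃ ε : Set S, Z ⊆ ε ∧ {y : X | d x y ⊂ ε} ⊆ U) ↔
      (U = ∅ ∨ U = Set.univ) := by
  have hdL : ∀ x y, d x y ⊆ L := fun x y => by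
    rw [hd]
    split_ifs
    exacts [empty_subset L, subset_rfl]
  exact forall_exists_ball_subset_iff_of_ball_eq_univ
    fun x _ hZε => setOf_dist_ssubset_eq_univ hdL hLZ hZε x

/-- for the discrete-type metric with L ⊊ Z, the induced topology is
indiscrete: the only open sets are ∅ and X. -/
theorem stmt13 {S X : Type*} [Nonempty X] [DecidableEq X]
    (Z L : Set S) (hZ : Z.Nonempty) (hL : L.Nonempty) (hLZ : L ⊂ Z)
    (d : X → X → Set S)
    (hd : ∀ x y, d x y = if x = y then (∅ : Set S) else L) :
    ∀ U : Set X,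
      (∀ x ∈ U, ∃ ε : Set S, Z ⊆ ε ∧ {y : X | d x y ⊂ ε} ⊆ U) ↔
      (U = ∅ ∨ U = Set.univ) :=
  stmt13_general Z L hLZ d hd
end

section
/- Let d : ℝ × ℝ → P(ℝ) be the P_Z(ℝ)-metric d(x,y) = ∅ if x = y and {x,y} otherwise, with Z = (a,b) an open interval, a < b. Then a subset A ⊆ ℝ is open in the induced topology if and only if A ∩ (a,b) = ∅ or (a,b) ⊆ A. -/
/-!
Since `d x y ⊆ {x, y}`, a point `y ≠ x` lies in the ball `{y | d x y ⊊ ε}` exactly when `x` and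
`y` lie in `ε` and `ε` has a third point. If `x, y ∈ Z ⊆ ε` and `Z` is infinite, such a third
point exists, so an open set meeting `Z` contains all of `Z`. Conversely, the radius `ε = Z`
shrinks the ball around a point outside `Z` to that point, and `ε = insert x Z` keeps the ball
around `x` inside `insert x Z`.
-/

namespace PZMetric

variable {α S : Type*}

def ball (d : α → α → Set S) (x : α) (ε : Set S) : Set α := {y | d x y ⊂ ε}

def IsOpen (d : α → α → Set S) (Z : Set S) (A : Set α) : Prop :=
  ∀ x ∈ A, ∃ ε, Z ⊆ ε ∧ ball d x ε ⊆ A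

section PairMetric

variable [DecidableEq α] {Z ε A : Set α} {x y : α}

def pairMetric (x y : α) : Set α := if x = y then ∅ else {x, y}

lemma pairMetric_subset_pair : pairMetric x y ⊆ {x, y} := by
  unfold pairMetric
  split_ifs
  exacts [Set.empty_subset _, subset_rfl]

lemma mem_of_mem_ball_pairMetric (hy : y ∈ ball pairMetric x ε) (hxy : x ≠ y) :
    x ∈ ε ∧ y ∈ ε := by
  have hpair : pairMetric x y ⊂ ε := hy
  rw [pairMetric, if_neg hxy] at hpair
  exact Set.insert_subset_iff.mp hpair.subset |>.imp_right Set.singleton_subset_iff.mp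

lemma mem_ball_pairMetric_of_infinite (hZ : Z.Infinite) (hZε : Z ⊆ ε) (hx : x ∈ Z)
    (hy : y ∈ Z) : y ∈ ball pairMetric x ε := by
  obtain ⟨z, hzZ, hzxy⟩ := hZ.exists_notMem_finite (Set.toFinite {x, y})
  have hpair : ({x, y} : Set α) ⊆ ε :=
    Set.insert_subset (hZε hx) (Set.singleton_subset_iff.mpr (hZε hy))
  exact (Set.ssubset_iff_of_subset (pairMetric_subset_pair.trans hpair)).mpr
    ⟨z, hZε hzZ, fun hz => hzxy (pairMetric_subset_pair hz)⟩

lemma subset_of_isOpen_pairMetric (hZ : Z.Infinite) (hA : IsOpen pairMetric Z A)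
    (hAZ : (A ∩ Z).Nonempty) : Z ⊆ A := by
  obtain ⟨x, hxA, hxZ⟩ := hAZ
  obtain ⟨ε, hZε, hball⟩ := hA x hxA
  exact fun y hy => hball (mem_ball_pairMetric_of_infinite hZ hZε hxZ hy)

lemma isOpen_pairMetric_of_inter_eq_empty (hAZ : A ∩ Z = ∅) : IsOpen pairMetric Z A := by
  refine fun x hxA => ⟨Z, subset_rfl, fun y hy => ?_⟩
  by_cases hxy : x = y
  · exact hxy ▸ hxA
  · have hxZ := (mem_of_mem_ball_pairMetric hy hxy).1
    exact absurd hAZ (Set.nonempty_iff_ne_empty.mp ⟨x, hxA, hxZ⟩)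

lemma isOpen_pairMetric_of_subset (hZA : Z ⊆ A) : IsOpen pairMetric Z A := by
  refine fun x hxA => ⟨insert x Z, Set.subset_insert x Z, fun y hy => ?_⟩
  by_cases hxy : x = y
  · exact hxy ▸ hxA
  · rcases (mem_of_mem_ball_pairMetric hy hxy).2 with rfl | hyZ
    exacts [hxA, hZA hyZ]

theorem isOpen_pairMetric_iff (hZ : Z.Infinite) :
    IsOpen pairMetric Z A ↔ A ∩ Z = ∅ ∨ Z ⊆ A := by
  refine ⟨fun hA => ?_, ?_⟩
  · rw [or_iff_not_imp_left, ← Ne, ← Set.nonempty_iff_ne_empty]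
    exact subset_of_isOpen_pairMetric hZ hA
  · rintro (hAZ | hZA)
    exacts [isOpen_pairMetric_of_inter_eq_empty hAZ, isOpen_pairMetric_of_subset hZA]

end PairMetric

end PZMetric

/-- for d(x,y) = {x,y} (x ≠ y) on ℝ with Z = (a,b), a < b, a set A is
open iff A ∩ (a,b) = ∅ or (a,b) ⊆ A. -/
theorem stmt15 (a b : ℝ) (hab : a < b)
    (d : ℝ → ℝ → Set ℝ)
    (hd : ∀ x y, d x y = if x = y then (∅ : Set ℝ) else {x, y})
    (A : Set ℝ) :
    (∀ x ∈ A, ∃ ε : Set ℝ, Set.Ioo a b ⊆ ε ∧ {y : ℝ | d x y ⊂ ε} ⊆ A) ↔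
    (A ∩ Set.Ioo a b = ∅ ∨ Set.Ioo a b ⊆ A) := by
  obtain rfl : d = PZMetric.pairMetric := funext₂ hd
  exact PZMetric.isOpen_pairMetric_iff (Set.Ioo_infinite hab)
end
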